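/- Let 0 < q ≤ v < ∞ and α, β > -1 with (α+1)/q = (β+1)/v, and let h : (0,∞) → [0,∞) be decreasing with I := ∫_0^∞ h(σ)^q dμ_α(σ) < ∞. Then there is a constant C = C(q,v,α,β) such that ∫_0^∞ h(σ)^v dμ_β(σ) ≤ C · I^{v/q}. -/

import Mathlib

/-!
Because `h` is decreasing, `h σ ^ q` times the `μ_α`-mass of `(0, u/2]` is at most
`I = ∫ h ^ q dμ_α` whenever `u ≤ 2σ`, which gives the growth bound
`h(σ)^q u^(α+1) e^(-u) ≤ Γ(α+2) I`. Write `h^v = h^q · (h^q)^(v/q - 1)` and bound the second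
factor by the growth bound at `u = (q/v) σ`. Since `(α+1)(v/q - 1) = β - α`, the resulting power
of `σ` turns the `β`-weight into the `α`-weight, while the price `e^((1 - q/v) σ)` is paid out of
`e^(-2σ)`, leaving `e^(-σ)`. The weight `σ^α e^(-σ)` is the `α`-weight at `σ/2`, and the
substitution `σ = 2x` together with `h(2x) ≤ h(x)` bounds its integral against `h^q` by `2 I`.
-/

open MeasureTheory Set Real
open scoped ENNReal

/-- `dμ_γ(σ) = gammaDensity γ σ dσ` on `(0, ∞)`: the Gamma law of shape `γ + 1` and rate `2`. -/
noncomputable def gammaDensity (γ σ : ℝ) : ℝ :=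
  2 ^ (γ + 1) / Gamma (γ + 1) * σ ^ γ * exp (-2 * σ)

theorem gammaDensity_nonneg {γ σ : ℝ} (hγ : -1 < γ) (hσ : 0 ≤ σ) : 0 ≤ gammaDensity γ σ := by
  have := Gamma_pos_of_pos (show 0 < γ + 1 by linarith)
  unfold gammaDensity
  positivity

theorem mul_setLIntegral_Ioc_le_of_antitoneOn {F W : ℝ → ℝ≥0∞} (hF : AntitoneOn F (Ioi 0))
    {s σ : ℝ} (hsσ : s ≤ σ) :
    F σ * ∫⁻ t in Ioc 0 s, W t ≤ ∫⁻ t in Ioi 0, F t * W t :=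
  calc F σ * ∫⁻ t in Ioc 0 s, W t ≤ ∫⁻ t in Ioc 0 s, F σ * W t := lintegral_const_mul_le _ _
    _ ≤ ∫⁻ t in Ioc 0 s, F t * W t := setLIntegral_mono' measurableSet_Ioc fun _ ht =>
        mul_le_mul_left (hF ht.1 (ht.1.trans_le (ht.2.trans hsσ)) (ht.2.trans hsσ)) _
    _ ≤ ∫⁻ t in Ioi 0, F t * W t := lintegral_mono_set Ioc_subset_Ioi_self

theorem setLIntegral_Ioi_mul_comp_div_two_le {F W : ℝ → ℝ≥0∞} (hF : AntitoneOn F (Ioi 0)) :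
    ∫⁻ σ in Ioi 0, F σ * W (σ / 2) ≤ 2 * ∫⁻ σ in Ioi 0, F σ * W σ := by
  have himage : (fun x : ℝ => 2 * x) '' Ioi 0 = Ioi 0 := by
    simpa using image_const_mul_Ioi_zero (two_pos (α := ℝ))
  have hsubst := lintegral_image_eq_lintegral_abs_deriv_mul (measurableSet_Ioi (a := (0 : ℝ)))
    (f := fun x : ℝ => 2 * x) (f' := fun _ => 2)
    (fun x _ => by simpa using ((hasDerivAt_id x).const_mul (2 : ℝ)).hasDerivWithinAt)
    (fun x _ y _ hxy => by simpa using hxy) (fun σ => F σ * W (σ / 2))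
  rw [himage] at hsubst
  rw [hsubst, lintegral_const_mul' _ _ ENNReal.ofReal_ne_top, abs_two, ENNReal.ofReal_ofNat]
  gcongr 2 * ?_
  refine setLIntegral_mono' measurableSet_Ioi fun x hx => ?_
  rw [mul_div_cancel_left₀ x two_ne_zero]
  exact mul_le_mul' (hF hx (mul_pos two_pos (mem_Ioi.1 hx)) (by linarith [mem_Ioi.1 hx])) le_rfl

theorem setLIntegral_Ioc_ofReal_rpow {γ : ℝ} (hγ : -1 < γ) {s : ℝ} (hs : 0 ≤ s) :
    ∫⁻ t in Ioc 0 s, ENNReal.ofReal (t ^ γ) = ENNReal.ofReal (s ^ (γ + 1) / (γ + 1)) := by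
  rw [← ofReal_integral_eq_lintegral_ofReal, ← intervalIntegral.integral_of_le hs,
    integral_rpow (Or.inl hγ), zero_rpow (by linarith), sub_zero]
  · exact (intervalIntegral.intervalIntegrable_rpow' hγ).1
  · filter_upwards [ae_restrict_mem measurableSet_Ioc] with t ht using rpow_nonneg ht.1.le _

theorem ofReal_le_setLIntegral_Ioc_gammaDensity {γ : ℝ} (hγ : -1 < γ) {s : ℝ} (hs : 0 ≤ s) :
    ENNReal.ofReal ((2 * s) ^ (γ + 1) * exp (-(2 * s)) / Gamma (γ + 2)) ≤
      ∫⁻ t in Ioc 0 s, ENNReal.ofReal (gammaDensity γ t) := by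
  have hΓ : 0 < Gamma (γ + 1) := Gamma_pos_of_pos (by linarith)
  have hc : 0 ≤ 2 ^ (γ + 1) / Gamma (γ + 1) * exp (-2 * s) := by positivity
  calc ENNReal.ofReal ((2 * s) ^ (γ + 1) * exp (-(2 * s)) / Gamma (γ + 2))
      = ENNReal.ofReal (2 ^ (γ + 1) / Gamma (γ + 1) * exp (-2 * s)) *
          ENNReal.ofReal (s ^ (γ + 1) / (γ + 1)) := by
        rw [← ENNReal.ofReal_mul hc, show γ + 2 = γ + 1 + 1 by ring,
          Gamma_add_one (by linarith), mul_rpow zero_le_two hs, neg_mul]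
        field_simp
    _ = ∫⁻ t in Ioc 0 s, ENNReal.ofReal (2 ^ (γ + 1) / Gamma (γ + 1) * exp (-2 * s)) *
          ENNReal.ofReal (t ^ γ) := by
        rw [lintegral_const_mul' _ _ ENNReal.ofReal_ne_top, setLIntegral_Ioc_ofReal_rpow hγ hs]
    _ ≤ ∫⁻ t in Ioc 0 s, ENNReal.ofReal (gammaDensity γ t) := by
        refine setLIntegral_mono' measurableSet_Ioc fun t ht => ?_
        rw [← ENNReal.ofReal_mul hc, gammaDensity, mul_right_comm _ (exp _)]
        have := ht.1.le
        exact ENNReal.ofReal_le_ofReal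
          (mul_le_mul_of_nonneg_left (exp_le_exp.2 (by linarith [ht.2])) (by positivity))

theorem mul_rpow_mul_exp_neg_le_of_antitoneOn {g : ℝ → ℝ} (hg : AntitoneOn g (Ioi 0))
    (hg0 : ∀ σ, 0 ≤ g σ) {γ : ℝ} (hγ : -1 < γ)
    (hfin : ∫⁻ t in Ioi 0, ENNReal.ofReal (g t * gammaDensity γ t) ≠ ⊤)
    {u σ : ℝ} (hu : 0 ≤ u) (huσ : u ≤ 2 * σ) :
    g σ * (u ^ (γ + 1) * exp (-u)) ≤
      Gamma (γ + 2) * (∫⁻ t in Ioi 0, ENNReal.ofReal (g t * gammaDensity γ t)).toReal := by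
  have hΓ : 0 < Gamma (γ + 2) := Gamma_pos_of_pos (by linarith)
  have hF : AntitoneOn (fun t => ENNReal.ofReal (g t)) (Ioi 0) :=
    fun a ha b hb hab => ENNReal.ofReal_le_ofReal (hg ha hb hab)
  have key : ENNReal.ofReal (g σ) *
        ENNReal.ofReal ((2 * (u / 2)) ^ (γ + 1) * exp (-(2 * (u / 2))) / Gamma (γ + 2)) ≤
      ∫⁻ t in Ioi 0, ENNReal.ofReal (g t) * ENNReal.ofReal (gammaDensity γ t) :=
    (mul_le_mul_right (ofReal_le_setLIntegral_Ioc_gammaDensity hγ (by positivity)) _).trans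
      (mul_setLIntegral_Ioc_le_of_antitoneOn hF (by linarith))
  simp_rw [← ENNReal.ofReal_mul (hg0 _), mul_div_cancel₀ u two_ne_zero] at key
  rw [← div_le_iff₀' hΓ, mul_div_assoc]
  exact (ENNReal.ofReal_le_iff_le_toReal hfin).1 key

theorem rpow_mul_rpow_le_of_mul_le {y t p r A : ℝ} (hy : 0 ≤ y) (ht : 0 ≤ t) (hr : 0 ≤ r)
    (h : y * (t ^ p * exp (-t)) ≤ A) :
    y ^ r * t ^ (p * r) ≤ A ^ r * exp (r * t) := by
  have hpow := rpow_le_rpow (by positivity) h hr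
  rw [mul_rpow hy (by positivity), mul_rpow (by positivity) (exp_pos _).le, ← rpow_mul ht,
    ← exp_mul] at hpow
  calc y ^ r * t ^ (p * r) = y ^ r * (t ^ (p * r) * exp (-t * r)) * exp (r * t) := by
        rw [mul_assoc, mul_assoc, ← exp_add, show -t * r + r * t = 0 by ring, exp_zero, mul_one]
    _ ≤ A ^ r * exp (r * t) := by gcongr

theorem gammaDensity_eq_mul_gammaDensity_div_two {α β σ : ℝ} (hα : -1 < α) (hσ : 0 < σ) :
    gammaDensity β σ =
      2 ^ β * Gamma (α + 1) / Gamma (β + 1) * (σ ^ (β - α) * exp (-σ)) *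
        gammaDensity α (σ / 2) := by
  have hΓ : 0 < Gamma (α + 1) := Gamma_pos_of_pos (by linarith)
  simp only [gammaDensity]
  rw [div_rpow hσ.le zero_le_two, rpow_sub hσ, rpow_add_one two_ne_zero, rpow_add_one two_ne_zero]
  have : exp (-2 * σ) = exp (-σ) * exp (-2 * (σ / 2)) := by rw [← exp_add]; ring_nf
  rw [this]
  field_simp

theorem neg_one_lt_of_add_one_div_eq {q v α β : ℝ} (hq : 0 < q) (hv : 0 < v) (hα : -1 < α)
    (heq : (α + 1) / q = (β + 1) / v) : -1 < β := by
  have : 0 < (β + 1) / v := heq ▸ div_pos (by linarith) hq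
  linarith [(div_pos_iff_of_pos_right hv).1 this]

theorem rpow_sub_one_mul_rpow_mul_exp_neg_le {q v α β y A σ : ℝ} (hq : 0 < q) (hqv : q ≤ v)
    (heq : (α + 1) / q = (β + 1) / v) (hy : 0 ≤ y) (hσ : 0 < σ)
    (hA : y * ((q / v * σ) ^ (α + 1) * exp (-(q / v * σ))) ≤ A) :
    y ^ (v / q - 1) * (σ ^ (β - α) * exp (-σ)) ≤ (v / q) ^ (β - α) * A ^ (v / q - 1) := by
  have hv : 0 < v := hq.trans_le hqv
  have hexp : (α + 1) * (v / q - 1) = β - α := by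
    field_simp at heq ⊢
    linarith
  have hr : 0 ≤ v / q - 1 := by rw [sub_nonneg, one_le_div hq]; exact hqv
  have hrσ : (v / q - 1) * (q / v * σ) ≤ σ := by
    have : (v / q - 1) * (q / v * σ) = σ - q / v * σ := by field_simp
    rw [this]
    have : 0 ≤ q / v * σ := by positivity
    linarith
  have h1 := rpow_mul_rpow_le_of_mul_le hy (by positivity) hr hA
  rw [hexp, mul_rpow (by positivity) hσ.le] at h1
  calc y ^ (v / q - 1) * (σ ^ (β - α) * exp (-σ))
      = (v / q) ^ (β - α) * (y ^ (v / q - 1) * ((q / v) ^ (β - α) * σ ^ (β - α))) * exp (-σ) := by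
        rw [← inv_div, inv_rpow (by positivity)]
        field_simp
    _ ≤ (v / q) ^ (β - α) * (A ^ (v / q - 1) * exp ((v / q - 1) * (q / v * σ))) * exp (-σ) := by
        gcongr
    _ ≤ (v / q) ^ (β - α) * A ^ (v / q - 1) * 1 := by
        have hA0 : 0 ≤ A := le_trans (by positivity) hA
        rw [mul_assoc, mul_assoc, ← exp_add, ← mul_assoc]
        gcongr
        exact exp_le_one_iff.2 (by linarith)
    _ = _ := mul_one _

theorem rpow_mul_gammaDensity_le {q v α β y A σ : ℝ} (hq : 0 < q) (hqv : q ≤ v) (hα : -1 < α)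
    (heq : (α + 1) / q = (β + 1) / v) (hy : 0 ≤ y) (hσ : 0 < σ)
    (hA : y * ((q / v * σ) ^ (α + 1) * exp (-(q / v * σ))) ≤ A) :
    y ^ (v / q) * gammaDensity β σ ≤
      2 ^ β * Gamma (α + 1) / Gamma (β + 1) * (v / q) ^ (β - α) * A ^ (v / q - 1) *
        (y * gammaDensity α (σ / 2)) := by
  have hv : 0 < v := hq.trans_le hqv
  have hβ := neg_one_lt_of_add_one_div_eq hq hv hα heq
  have hbound := rpow_sub_one_mul_rpow_mul_exp_neg_le hq hqv heq hy hσ hA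
  have hy' : y ^ (v / q) = y ^ (v / q - 1) * y := by
    rw [← rpow_add_one' hy (by rw [sub_add_cancel]; positivity), sub_add_cancel]
  have hK : 0 ≤ 2 ^ β * Gamma (α + 1) / Gamma (β + 1) := by
    have := Gamma_pos_of_pos (show 0 < α + 1 by linarith)
    have := Gamma_pos_of_pos (show 0 < β + 1 by linarith)
    positivity
  have hw := gammaDensity_nonneg hα (show 0 ≤ σ / 2 by positivity)
  calc y ^ (v / q) * gammaDensity β σ
      = 2 ^ β * Gamma (α + 1) / Gamma (β + 1) * (y ^ (v / q - 1) * (σ ^ (β - α) * exp (-σ))) *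
          (y * gammaDensity α (σ / 2)) := by
        rw [gammaDensity_eq_mul_gammaDensity_div_two hα hσ, hy']
        ring
    _ ≤ _ := by
        rw [mul_assoc _ ((v / q) ^ (β - α))]
        gcongr

theorem ofReal_mul_mul_toReal_rpow_mul_self {c d r : ℝ} {I : ℝ≥0∞} (hI : I ≠ ⊤) (hd : 0 ≤ d)
    (hr : 0 ≤ r) :
    ENNReal.ofReal (c * (d * I.toReal) ^ r) * I = ENNReal.ofReal (c * d ^ r) * I ^ (r + 1) := by
  rw [mul_rpow hd ENNReal.toReal_nonneg, ← mul_assoc,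
    ENNReal.ofReal_mul' (rpow_nonneg ENNReal.toReal_nonneg _),
    ← ENNReal.ofReal_rpow_of_nonneg ENNReal.toReal_nonneg hr, ENNReal.ofReal_toReal hI,
    ENNReal.rpow_add_of_nonneg _ _ hr zero_le_one, ENNReal.rpow_one, mul_assoc]

noncomputable def embeddingConstant (q v α β : ℝ) : ℝ :=
  2 * (2 ^ β * Gamma (α + 1) / Gamma (β + 1) * (v / q) ^ (β - α)) * Gamma (α + 2) ^ (v / q - 1)

theorem embeddingConstant_pos {q v α β : ℝ} (hq : 0 < q) (hqv : q ≤ v) (hα : -1 < α)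
    (heq : (α + 1) / q = (β + 1) / v) : 0 < embeddingConstant q v α β := by
  have hv : 0 < v := hq.trans_le hqv
  have := Gamma_pos_of_pos (show 0 < α + 1 by linarith)
  have := Gamma_pos_of_pos (show 0 < α + 2 by linarith)
  have := Gamma_pos_of_pos (show 0 < β + 1 by linarith [neg_one_lt_of_add_one_div_eq hq hv hα heq])
  unfold embeddingConstant
  positivity

theorem lintegral_rpow_mul_gammaDensity_le {q v α β : ℝ} (hq : 0 < q) (hqv : q ≤ v)
    (hα : -1 < α) (heq : (α + 1) / q = (β + 1) / v) {h : ℝ → ℝ} (hanti : AntitoneOn h (Ioi 0))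
    (hpos : ∀ σ, 0 ≤ h σ)
    (hfin : ∫⁻ σ in Ioi 0, ENNReal.ofReal (h σ ^ q * gammaDensity α σ) ≠ ⊤) :
    ∫⁻ σ in Ioi 0, ENNReal.ofReal (h σ ^ v * gammaDensity β σ) ≤
      ENNReal.ofReal (embeddingConstant q v α β) *
        (∫⁻ σ in Ioi 0, ENNReal.ofReal (h σ ^ q * gammaDensity α σ)) ^ (v / q) := by
  set I := ∫⁻ σ in Ioi 0, ENNReal.ofReal (h σ ^ q * gammaDensity α σ)
  have hv : 0 < v := hq.trans_le hqv
  have hq0 : ∀ σ, 0 ≤ h σ ^ q := fun σ => rpow_nonneg (hpos σ) q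
  have hg : AntitoneOn (fun σ => h σ ^ q) (Ioi 0) :=
    fun a ha b hb hab => rpow_le_rpow (hpos b) (hanti ha hb hab) hq.le
  set c := 2 ^ β * Gamma (α + 1) / Gamma (β + 1) * (v / q) ^ (β - α) *
    (Gamma (α + 2) * I.toReal) ^ (v / q - 1) with hc
  have hpoint : ∀ σ ∈ Ioi 0, ENNReal.ofReal (h σ ^ v * gammaDensity β σ) ≤
      ENNReal.ofReal c *
        (ENNReal.ofReal (h σ ^ q) * ENNReal.ofReal (gammaDensity α (σ / 2))) := by
    intro σ (hσ : 0 < σ)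
    rw [← ENNReal.ofReal_mul (hq0 σ),
      ← ENNReal.ofReal_mul' (mul_nonneg (hq0 σ) (gammaDensity_nonneg hα (by positivity)))]
    refine ENNReal.ofReal_le_ofReal ?_
    rw [show h σ ^ v = (h σ ^ q) ^ (v / q) by rw [← rpow_mul (hpos σ), mul_div_cancel₀ v hq.ne']]
    exact rpow_mul_gammaDensity_le hq hqv hα heq (hq0 σ) hσ
      (mul_rpow_mul_exp_neg_le_of_antitoneOn hg hq0 hα hfin (by positivity)
        (mul_le_mul_of_nonneg_right (((div_le_one hv).2 hqv).trans one_le_two) hσ.le))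
  calc ∫⁻ σ in Ioi 0, ENNReal.ofReal (h σ ^ v * gammaDensity β σ)
      ≤ ∫⁻ σ in Ioi 0, ENNReal.ofReal c *
          (ENNReal.ofReal (h σ ^ q) * ENNReal.ofReal (gammaDensity α (σ / 2))) :=
        setLIntegral_mono' measurableSet_Ioi hpoint
    _ = ENNReal.ofReal c * ∫⁻ σ in Ioi 0,
          ENNReal.ofReal (h σ ^ q) * ENNReal.ofReal (gammaDensity α (σ / 2)) :=
        lintegral_const_mul' _ _ ENNReal.ofReal_ne_top
    _ ≤ ENNReal.ofReal c * (2 * I) := by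
        gcongr
        simpa only [← ENNReal.ofReal_mul (hq0 _)] using setLIntegral_Ioi_mul_comp_div_two_le
          (W := fun σ => ENNReal.ofReal (gammaDensity α σ))
          (fun a ha b hb hab => ENNReal.ofReal_le_ofReal (hg ha hb hab))
    _ = _ := by
        have hr : 0 ≤ v / q - 1 := by rw [sub_nonneg, one_le_div hq]; exact hqv
        rw [hc, mul_left_comm, ofReal_mul_mul_toReal_rpow_mul_self hfin
            (Gamma_pos_of_pos (by linarith)).le hr, sub_add_cancel, embeddingConstant,
          mul_assoc 2, ENNReal.ofReal_mul zero_le_two, ENNReal.ofReal_ofNat]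
        ring

theorem embedding_equal_quantitative_general (q v α β : ℝ) (hq : 0 < q) (hqv : q ≤ v)
    (hα : -1 < α) (heq : (α + 1) / q = (β + 1) / v) :
    ∃ C : ℝ, 0 < C ∧ ∀ h : ℝ → ℝ, AntitoneOn h (Set.Ioi 0) → (∀ σ, 0 ≤ h σ) →
      (∫⁻ σ in Set.Ioi (0 : ℝ),
          ENNReal.ofReal (h σ ^ q *
            ((2 ^ (α + 1) / Real.Gamma (α + 1)) * σ ^ α * Real.exp (-2 * σ)))) < ⊤ →
      (∫⁻ σ in Set.Ioi (0 : ℝ),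
          ENNReal.ofReal (h σ ^ v *
            ((2 ^ (β + 1) / Real.Gamma (β + 1)) * σ ^ β * Real.exp (-2 * σ)))) ≤
        ENNReal.ofReal C *
          (∫⁻ σ in Set.Ioi (0 : ℝ),
            ENNReal.ofReal (h σ ^ q *
              ((2 ^ (α + 1) / Real.Gamma (α + 1)) * σ ^ α * Real.exp (-2 * σ)))) ^ (v / q) :=
  ⟨embeddingConstant q v α β, embeddingConstant_pos hq hqv hα heq,
    fun _ hanti hpos hfin => lintegral_rpow_mul_gammaDensity_le hq hqv hα heq hanti hpos hfin.ne⟩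

/-- Quantitative embedding in the equality case: for `0 < q ≤ v < ∞`, `α, β > -1` with
`(α+1)/q = (β+1)/v`, there is `C = C(q,v,α,β) > 0` such that for every decreasing
`h : (0,∞) → [0,∞)` with `I := ∫_0^∞ h(σ)^q dμ_α(σ) < ∞`,
`∫_0^∞ h(σ)^v dμ_β(σ) ≤ C · I^{v/q}`. -/
theorem embedding_equal_quantitative (q v α β : ℝ) (hq : 0 < q) (hqv : q ≤ v)
    (hα : -1 < α) (hβ : -1 < β) (heq : (α + 1) / q = (β + 1) / v) :
    ∃ C : ℝ, 0 < C ∧ ∀ h : ℝ → ℝ, AntitoneOn h (Set.Ioi 0) → (∀ σ, 0 ≤ h σ) →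
      (∫⁻ σ in Set.Ioi (0 : ℝ),
          ENNReal.ofReal (h σ ^ q *
            ((2 ^ (α + 1) / Real.Gamma (α + 1)) * σ ^ α * Real.exp (-2 * σ)))) < ⊤ →
      (∫⁻ σ in Set.Ioi (0 : ℝ),
          ENNReal.ofReal (h σ ^ v *
            ((2 ^ (β + 1) / Real.Gamma (β + 1)) * σ ^ β * Real.exp (-2 * σ)))) ≤
        ENNReal.ofReal C *
          (∫⁻ σ in Set.Ioi (0 : ℝ),
            ENNReal.ofReal (h σ ^ q *
              ((2 ^ (α + 1) / Real.Gamma (α + 1)) * σ ^ α * Real.exp (-2 * σ)))) ^ (v / q) :=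
  embedding_equal_quantitative_general q v α β hq hqv hα heq
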